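/- Let H₂ = [1 1 ⋯ 1; x^{i₁} x^{i₂} ⋯ x^{i_{n_v}}] be a parity-check matrix built from N × N circulant permutation matrices x^{iⱼ} (shift by iⱼ mod N), with i₁ = 0. Then girth(H₂) > 4 if and only if the residues i₁, i₂, …, i_{n_v} are pairwise distinct modulo N. -/

import Mathlib

/-!
The Tanner graph is bipartite, so its girth exceeds 4 exactly when it has no 4-cycle, that is,
when no two rows of the matrix have nonzero entries in two common columns. In `H₂` two rows of
the same block row never meet in a column, while row `r` of the identity block and row `s` of
the circulant block meet exactly in the columns `(j, r)` with `r ≡ s + i_j`; there are two such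
columns precisely when two shifts `i_j` coincide.
-/

open Matrix

/-- The permutation matrix (over ℕ) associated with a permutation. -/
def permMatrix {N : ℕ} (σ : Equiv.Perm (Fin N)) : Matrix (Fin N) (Fin N) ℕ :=
  Matrix.of fun i j => if σ i = j then 1 else 0

/-- The Tanner graph of an ℕ-valued matrix: the bipartite simple graph on rows ⊕ columns
with an edge between row `i` and column `j` whenever `M i j ≠ 0`. -/
def tanner {α β : Type*} (M : Matrix α β ℕ) : SimpleGraph (α ⊕ β) :=
  SimpleGraph.fromRel fun u v => ∃ i j, u = Sum.inl i ∧ v = Sum.inr j ∧ M i j ≠ 0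

open Classical in
/-- The girth of the Tanner (multi)graph of an ℕ-valued matrix: an entry `≥ 2` is a
multiple edge, giving girth `2`; otherwise the girth of the Tanner simple graph
(`⊤` if there is no cycle). -/
noncomputable def matGirth {α β : Type*} (M : Matrix α β ℕ) : ℕ∞ :=
  if ∃ i j, 2 ≤ M i j then 2 else (tanner M).egirth


/-- The `N × N` circulant permutation matrix with shift `r` (mod `N`):
entry `(i, j)` equals `1` iff `j ≡ i + r (mod N)`. -/
def circ (N : ℕ) (r : ZMod N) : Matrix (Fin N) (Fin N) ℕ :=
  Matrix.of fun i j => if ((j : ℕ) : ZMod N) = ((i : ℕ) : ZMod N) + r then 1 else 0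

/-- The block matrix with first block row all identities and second block row the
circulant permutation matrices `circ N (e j)`. -/
def H2circ {N nv : ℕ} (e : Fin nv → ZMod N) :
    Matrix (Fin 2 × Fin N) (Fin nv × Fin N) ℕ :=
  Matrix.of fun p q =>
    if p.1 = 0 then (if p.2 = q.2 then 1 else 0) else circ N (e q.1) p.2 q.2

namespace SimpleGraph

variable {V : Type*} {G : SimpleGraph V}

lemma egirth_le_four {a b c d : V} (hab : G.Adj a b) (hbc : G.Adj b c) (hcd : G.Adj c d)
    (hda : G.Adj d a) (hac : a ≠ c) (hbd : b ≠ d) : G.egirth ≤ 4 := by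
  have hcycle : (Walk.cons hab (.cons hbc (.cons hcd (.cons hda .nil)))).IsCycle := by
    simp [Walk.isCycle_def, Walk.isTrail_def, hab.ne, hbc.ne, hcd.ne, hda.ne, hab.ne.symm,
      hda.ne.symm, hac, hac.symm, hbd]
  exact egirth_le_length hcycle

lemma Walk.IsCycle.exists_square {u : V} {w : G.Walk u u} (hw : w.IsCycle) (h4 : w.length = 4) :
    ∃ b c d, G.Adj u b ∧ G.Adj b c ∧ G.Adj c d ∧ G.Adj d u ∧ u ≠ c ∧ b ≠ d := by
  match w, hw with
  | .cons hab (.cons hbc (.cons hcd (.cons hda .nil))), hw =>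
    rw [Walk.isCycle_def] at hw
    refine ⟨_, _, _, hab, hbc, hcd, hda, ?_, ?_⟩ <;> simp_all

lemma four_lt_egirth_iff_of_colorable_two (hG : G.Colorable 2) :
    4 < G.egirth ↔ ∀ a b c d, G.Adj a b → G.Adj b c → G.Adj c d → G.Adj d a → a = c ∨ b = d := by
  constructor
  · intro h a b c d hab hbc hcd hda
    by_contra! hne
    exact (egirth_le_four hab hbc hcd hda hne.1 hne.2).not_gt h
  · intro h
    refine (ENat.add_one_le_iff (by simp)).mp (le_egirth.mpr fun u w hw => ?_)
    have hlen3 := hw.three_le_length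
    have hlen4 : w.length ≠ 4 := fun h4 => by
      obtain ⟨b, c, d, hab, hbc, hcd, hda, hac, hbd⟩ := hw.exists_square h4
      exact (h u b c d hab hbc hcd hda).elim hac hbd
    obtain ⟨k, hk⟩ := two_colorable_iff_forall_loop_even.mp hG u w
    norm_cast
    omega

end SimpleGraph

section Tanner

variable {α β : Type*} (M : Matrix α β ℕ)

@[simp] lemma tanner_adj_inl_inr (i : α) (j : β) :
    (tanner M).Adj (.inl i) (.inr j) ↔ M i j ≠ 0 := by
  simp [tanner]

@[simp] lemma tanner_adj_inr_inl (i : α) (j : β) :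
    (tanner M).Adj (.inr j) (.inl i) ↔ M i j ≠ 0 := by
  simp [tanner]

@[simp] lemma tanner_not_adj_inl_inl (i i' : α) : ¬ (tanner M).Adj (.inl i) (.inl i') := by
  simp [tanner]

@[simp] lemma tanner_not_adj_inr_inr (j j' : β) : ¬ (tanner M).Adj (.inr j) (.inr j') := by
  simp [tanner]

lemma colorable_two_tanner : (tanner M).Colorable 2 := by
  simpa using (SimpleGraph.Coloring.mk (G := tanner M) Sum.isLeft fun {u v} huv => by
    rcases u with _ | _ <;> rcases v with _ | _ <;> simp_all).colorable

def Matrix.IsRectangleFree : Prop :=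
  ∀ i i' j j', M i j ≠ 0 → M i j' ≠ 0 → M i' j ≠ 0 → M i' j' ≠ 0 → i = i' ∨ j = j'

lemma four_lt_egirth_tanner_iff : 4 < (tanner M).egirth ↔ M.IsRectangleFree := by
  rw [SimpleGraph.four_lt_egirth_iff_of_colorable_two (colorable_two_tanner M)]
  constructor
  · intro h i i' j j' hij hij' hi'j hi'j'
    simpa using h (.inl i) (.inr j) (.inl i') (.inr j') (by simpa) (by simpa) (by simpa) (by simpa)
  · intro h a b c d hab hbc hcd hda
    rcases a with i | j <;> rcases b with i₁ | j₁ <;> rcases c with i' | j' <;>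
      rcases d with i₂ | j₂ <;> simp_all
    · exact h i i' j₁ j₂ hab hda hbc hcd
    · exact (h i₁ i₂ j j' hab hbc hda hcd).symm

end Tanner

section Circulant

variable {N nv : ℕ} (e : Fin nv → ZMod N)

lemma natCast_fin_injective : Function.Injective fun a : Fin N => ((a : ℕ) : ZMod N) := by
  intro a b h
  simpa [ZMod.natCast_eq_natCast_iff', Nat.mod_eq_of_lt, Fin.ext_iff] using h

lemma H2circ_ne_zero_iff (p : Fin 2 × Fin N) (q : Fin nv × Fin N) :
    H2circ e p q ≠ 0 ↔
      (p.1 = 0 ∧ p.2 = q.2) ∨ (p.1 = 1 ∧ ((q.2 : ℕ) : ZMod N) = (p.2 : ℕ) + e q.1) := by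
  obtain ⟨p₁, p₂⟩ := p
  fin_cases p₁ <;> simp [H2circ, circ]

lemma isRectangleFree_H2circ (he : Function.Injective e) : (H2circ e).IsRectangleFree := by
  rintro ⟨r₁, r₂⟩ ⟨r₁', r₂'⟩ ⟨c₁, c₂⟩ ⟨c₁', c₂'⟩ hrc hrc' hr'c hr'c'
  simp only [H2circ_ne_zero_iff] at hrc hrc' hr'c hr'c'
  fin_cases r₁ <;> fin_cases r₁' <;> simp_all
  · exact he hr'c'
  · exact he hrc.symm
  · exact .inl (natCast_fin_injective hr'c)

lemma not_isRectangleFree_H2circ (hN : 0 < N) {q q' : Fin nv} (hne : q ≠ q') (heq : e q = e q') :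
    ¬ (H2circ e).IsRectangleFree := by
  have : NeZero N := ⟨hN.ne'⟩
  set a : Fin N := ⟨(e q).val, ZMod.val_lt _⟩
  have ha : ((a : ℕ) : ZMod N) = e q := ZMod.natCast_zmod_val _
  intro h
  have hrect := h (0, a) (1, ⟨0, hN⟩) (q, a) (q', a)
  simp [H2circ_ne_zero_iff, ha, heq, hne] at hrect

lemma isRectangleFree_H2circ_iff (hN : 0 < N) :
    (H2circ e).IsRectangleFree ↔ Function.Injective e := by
  refine ⟨fun h => ?_, isRectangleFree_H2circ e⟩
  by_contra hinj
  obtain ⟨q, q', heq, hne⟩ := Function.not_injective_iff.mp hinj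
  exact not_isRectangleFree_H2circ e hN hne heq h

end Circulant

theorem stmt9_general {N nv : ℕ} (hN : 0 < N) (e : Fin nv → ZMod N) :
    (4 : ℕ∞) < (tanner (H2circ e)).egirth ↔ Function.Injective e := by
  rw [four_lt_egirth_tanner_iff, isRectangleFree_H2circ_iff e hN]

theorem stmt9 {N nv : ℕ} (hN : 0 < N) [NeZero nv] (e : Fin nv → ZMod N) (h0 : e 0 = 0) :
    (4 : ℕ∞) < (tanner (H2circ e)).egirth ↔ Function.Injective e :=
  stmt9_general hN e
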